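/- arXiv:1611.04213 — 2 statements merged into one kernel-verified Lean document; each statement's English description precedes it below -/
import Mathlib

section
/- S(C(k,t), k, t) = C(k,t+1) for every positive integer k and 0 ≤ t ≤ k; i.e., the transpose of the AN PDA is an optimal (C(k,t), k, t, C(k,t+1)) PDA. -/
/-!
Index the columns by the `t`-subsets `T` of `Fin k` and put a star in row `i` when `i ∈ T`,
otherwise the label of the `(t + 1)`-subset `insert i T`: equal labels `insert i₁ T₁ = insert i₂ T₂`
force `i₁ ∈ T₂` and `i₂ ∈ T₁`, so this transposed Ali–Niesen array is a
`(C(k,t), k, t, C(k,t+1))` PDA.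

Conversely, a `(K, F, Z, S)` PDA has `K (F - Z)` integer cells and each integer occupies at most
`Z + 1` of them, so `K (F - Z) ≤ S (Z + 1)`. For `K = C(k,t)`, `F = k`, `Z = t` the left side is
`C(k,t+1) (t + 1)`.
-/

/-- A `(K, F, Z, S)` placement delivery array: an `F × K` array over `[0,S) ∪ {*}`
(star encoded as `none`) such that each column contains exactly `Z` stars, every
integer in `[0,S)` appears, and any two equal integer entries lie in distinct rows
and distinct columns with stars at the two crossing positions. -/
def IsPDA (K F Z S : ℕ) (P : Fin F → Fin K → Option ℕ) : Prop :=
  (∀ j, (Finset.univ.filter fun i => P i j = none).card = Z) ∧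
  (∀ i j s, P i j = some s → s < S) ∧
  (∀ s, s < S → ∃ i j, P i j = some s) ∧
  (∀ i₁ j₁ i₂ j₂ s, P i₁ j₁ = some s → P i₂ j₂ = some s → (i₁ ≠ i₂ ∨ j₁ ≠ j₂) →
    i₁ ≠ i₂ ∧ j₁ ≠ j₂ ∧ P i₁ j₂ = none ∧ P i₂ j₁ = none)

/-- `minS K F Z` is the minimum `S` for which a `(K, F, Z, S)` PDA exists. -/
noncomputable def minS (K F Z : ℕ) : ℕ :=
  sInf {S | ∃ P : Fin F → Fin K → Option ℕ, IsPDA K F Z S P}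

open Finset

namespace IsPDA

variable {K F Z S : ℕ} {P : Fin F → Fin K → Option ℕ}

lemma card_filter_ne_none (h : IsPDA K F Z S P) (j : Fin K) :
    #{i | P i j ≠ none} = F - Z := by
  have := card_filter_add_card_filter_not (s := univ) (p := fun i => P i j = none)
  rw [h.1 j, card_univ, Fintype.card_fin] at this
  simp only [← ne_eq] at this
  omega

lemma card_cells_ne_none (h : IsPDA K F Z S P) :
    #{c : Fin F × Fin K | P c.1 c.2 ≠ none} = K * (F - Z) := by
  rw [card_filter, Fintype.sum_prod_type_right]
  simp only [← card_filter, h.card_filter_ne_none, sum_const, card_univ, Fintype.card_fin,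
    smul_eq_mul]

lemma crossing (h : IsPDA K F Z S P) {s : ℕ} {c c' : Fin F × Fin K}
    (hc : P c.1 c.2 = some s) (hc' : P c'.1 c'.2 = some s) (hne : c ≠ c') :
    c.1 ≠ c'.1 ∧ P c.1 c'.2 = none :=
  have hcross := h.2.2.2 c.1 c.2 c'.1 c'.2 s hc hc' (by grind)
  ⟨hcross.1, hcross.2.2.1⟩

/-- All other cells holding `s` lie in distinct star rows of the column of one such cell. -/
lemma card_cells_eq_some_le (h : IsPDA K F Z S P) (s : ℕ) :
    #{c : Fin F × Fin K | P c.1 c.2 = some s} ≤ Z + 1 := by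
  set B : Finset (Fin F × Fin K) := {c | P c.1 c.2 = some s}
  obtain hB | ⟨c₀, hc₀⟩ := B.eq_empty_or_nonempty
  · simp [hB]
  rw [← card_erase_add_one hc₀, ← h.1 c₀.2, add_le_add_iff_right]
  simp only [B, mem_filter, mem_univ, true_and] at hc₀
  refine card_le_card_of_injOn Prod.fst (fun c hc => ?_) (fun c hc c' hc' hcc => ?_)
  · simp only [B, mem_coe, mem_erase, mem_filter, mem_univ, true_and] at hc ⊢
    exact (h.crossing hc.2 hc₀ hc.1).2
  · simp only [B, mem_coe, mem_erase, mem_filter, mem_univ, true_and] at hc hc'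
    by_contra hne
    exact (h.crossing hc.2 hc'.2 hne).1 hcc

theorem mul_sub_le_mul_succ (h : IsPDA K F Z S P) : K * (F - Z) ≤ S * (Z + 1) := by
  set A : Finset (Fin F × Fin K) := {c | P c.1 c.2 ≠ none}
  have himage : #(A.image fun c => P c.1 c.2) ≤ S := by
    calc #(A.image fun c => P c.1 c.2) ≤ #((range S).image some) := by
          refine card_le_card fun v hv => ?_
          obtain ⟨c, hc, rfl⟩ := mem_image.1 hv
          obtain ⟨s, hs⟩ := Option.ne_none_iff_exists'.1 (mem_filter.1 hc).2
          rw [hs]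
          exact mem_image_of_mem some (mem_range.2 (h.2.1 _ _ _ hs))
      _ ≤ S := card_image_le.trans (card_range S).le
  have hfiber : ∀ v ∈ A.image fun c => P c.1 c.2, #{c ∈ A | P c.1 c.2 = v} ≤ Z + 1 := by
    intro v hv
    obtain ⟨c, hc, rfl⟩ := mem_image.1 hv
    obtain ⟨s, hs⟩ := Option.ne_none_iff_exists'.1 (mem_filter.1 hc).2
    rw [hs]
    exact (card_le_card (filter_subset_filter _ (subset_univ A))).trans
      (h.card_cells_eq_some_le s)
  calc K * (F - Z) = #A := h.card_cells_ne_none.symm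
    _ ≤ (Z + 1) * #(A.image fun c => P c.1 c.2) := card_le_mul_card_image A _ hfiber
    _ ≤ S * (Z + 1) := by rw [mul_comm]; exact Nat.mul_le_mul_right _ himage

end IsPDA

lemma Finset.mem_of_insert_eq_insert {α : Type*} [DecidableEq α] {a b : α} {s u : Finset α}
    (h : insert a s = insert b u) (hab : a ≠ b) : a ∈ u :=
  (mem_insert.1 (h ▸ mem_insert_self a s)).resolve_left hab

section ANTranspose

noncomputable def subsetEnum (k t : ℕ) : Fin (k.choose t) ≃ {s : Finset (Fin k) // #s = t} :=
  (Fintype.equivFinOfCardEq (by simp [Fintype.card_finset_len])).symm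

variable {k t : ℕ}

noncomputable def anTranspose (k t : ℕ) (i : Fin k) (j : Fin (k.choose t)) : Option ℕ :=
  if h : i ∈ (subsetEnum k t j).1 then none
  else some ((subsetEnum k (t + 1)).symm
    ⟨insert i (subsetEnum k t j).1, by rw [card_insert_of_notMem h, (subsetEnum k t j).2]⟩)

lemma anTranspose_eq_none_iff {i : Fin k} {j : Fin (k.choose t)} :
    anTranspose k t i j = none ↔ i ∈ (subsetEnum k t j).1 := by
  unfold anTranspose
  split_ifs with h <;> simp [h]

lemma anTranspose_eq_some_iff {i : Fin k} {j : Fin (k.choose t)} {s : ℕ} :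
    anTranspose k t i j = some s ↔ i ∉ (subsetEnum k t j).1 ∧
      ∃ u : Fin (k.choose (t + 1)), (u : ℕ) = s ∧
        insert i (subsetEnum k t j).1 = (subsetEnum k (t + 1) u).1 := by
  unfold anTranspose
  split_ifs with h
  · simp [h]
  · refine ⟨fun hs => ⟨h, _, Option.some_inj.1 hs, by simp⟩, ?_⟩
    rintro ⟨-, u, rfl, hu⟩
    rw [Option.some_inj, Fin.val_inj, Equiv.symm_apply_eq]
    exact Subtype.ext hu

theorem isPDA_anTranspose (k t : ℕ) :
    IsPDA (k.choose t) k t (k.choose (t + 1)) (anTranspose k t) := by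
  refine ⟨fun j => ?_, fun i j s hs => ?_, fun s hs => ?_, ?_⟩
  · simp only [anTranspose_eq_none_iff, filter_univ_mem]
    exact (subsetEnum k t j).2
  · obtain ⟨-, u, rfl, -⟩ := anTranspose_eq_some_iff.1 hs
    exact u.2
  · set U := subsetEnum k (t + 1) ⟨s, hs⟩
    obtain ⟨i, hi⟩ : U.1.Nonempty := card_pos.1 (by rw [U.2]; omega)
    obtain ⟨j, hj⟩ := (subsetEnum k t).surjective
      ⟨U.1.erase i, by rw [card_erase_of_mem hi, U.2, Nat.add_sub_cancel]⟩
    refine ⟨i, j, anTranspose_eq_some_iff.2 ⟨?_, ⟨s, hs⟩, rfl, ?_⟩⟩ <;> rw [hj]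
    · exact notMem_erase i _
    · exact insert_erase hi
  intro i₁ j₁ i₂ j₂ s h₁ h₂ hne
  obtain ⟨hi₁, u, rfl, hu₁⟩ := anTranspose_eq_some_iff.1 h₁
  obtain ⟨hi₂, u', hu', hu₂⟩ := anTranspose_eq_some_iff.1 h₂
  obtain rfl : u' = u := Fin.ext hu'
  have hins := hu₁.trans hu₂.symm
  -- the common `(t + 1)`-subset determines the column once the row is known
  have hii : i₁ ≠ i₂ := by
    rintro rfl
    have : subsetEnum k t j₁ = subsetEnum k t j₂ := Subtype.ext <| by
      rw [← erase_insert hi₁, ← erase_insert hi₂, hins]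
    exact hne.elim (· rfl) (· ((subsetEnum k t).injective this))
  have hm₁ := mem_of_insert_eq_insert hins hii
  have hm₂ := mem_of_insert_eq_insert hins.symm hii.symm
  exact ⟨hii, fun h => hi₁ (h ▸ hm₁), anTranspose_eq_none_iff.2 hm₁,
    anTranspose_eq_none_iff.2 hm₂⟩

end ANTranspose

theorem minS_le {K F Z S : ℕ} {P : Fin F → Fin K → Option ℕ} (h : IsPDA K F Z S P) :
    minS K F Z ≤ S :=
  Nat.sInf_le ⟨P, h⟩

theorem exists_isPDA_minS {K F Z S : ℕ} {P : Fin F → Fin K → Option ℕ} (h : IsPDA K F Z S P) :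
    ∃ Q, IsPDA K F Z (minS K F Z) Q :=
  Nat.sInf_mem (s := {S | ∃ P, IsPDA K F Z S P}) ⟨S, P, h⟩

theorem stmt12_general (k t : ℕ) :
    minS (Nat.choose k t) k t = Nat.choose k (t + 1) := by
  have hAN := isPDA_anTranspose k t
  refine le_antisymm (minS_le hAN) ?_
  obtain ⟨P, hP⟩ := exists_isPDA_minS hAN
  refine Nat.le_of_mul_le_mul_right ?_ t.succ_pos
  rw [Nat.choose_succ_right_eq]
  exact hP.mul_sub_le_mul_succ

/-- S(C(k,t), k, t) = C(k,t+1): the transpose of the AN PDA is an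
optimal (C(k,t), k, t, C(k,t+1)) PDA. -/
theorem stmt12 (k t : ℕ) (hk : 0 < k) (ht : t ≤ k) :
    minS (Nat.choose k t) k t = Nat.choose k (t + 1) :=
  stmt12_general k t
end

section
/- Let n be a positive even integer. There exists a (n²/2, n, n−2, n+2) PDA, and every (n²/2, n, n−2, S) PDA satisfies S ≥ n+2; hence S(n²/2, n, n−2) = n+2. -/
open Finset

section LowerBound

variable {K F Z S : ℕ} {P : Fin F → Fin K → Option ℕ}

theorem IsPDA.card_filter_eq_some_le (h : IsPDA K F Z S P) (s : ℕ) :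
    #{p : Fin F × Fin K | P p.1 p.2 = some s} ≤ Z + 1 := by
  set A := ({p : Fin F × Fin K | P p.1 p.2 = some s} : Finset _)
  have cross : ∀ p ∈ A, ∀ q ∈ A, p ≠ q → p.1 ≠ q.1 ∧ P p.1 q.2 = none := by
    intro p hp q hq hpq
    simp only [A, mem_filter, mem_univ, true_and] at hp hq
    have := h.2.2.2 p.1 p.2 q.1 q.2 s hp hq (by contrapose! hpq; exact Prod.ext hpq.1 hpq.2)
    exact ⟨this.1, this.2.2.1⟩
  obtain hA | ⟨p₀, hp₀⟩ := A.eq_empty_or_nonempty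
  · simp [A, hA]
  calc #A ≤ #(insert p₀.1 ({i | P i p₀.2 = none} : Finset (Fin F))) := by
        refine card_le_card_of_injOn Prod.fst (fun p hp => ?_) fun p hp q hq hpq => ?_
        · by_cases hpp₀ : p = p₀
          · simp [hpp₀]
          · simp [(cross p hp p₀ hp₀ hpp₀).2]
        · by_contra hpq'
          exact (cross p hp q hq hpq').1 hpq
    _ ≤ #({i | P i p₀.2 = none} : Finset (Fin F)) + 1 := card_insert_le _ _
    _ = Z + 1 := by rw [h.1]

theorem IsPDA.card_filter_ne_none_s18 (h : IsPDA K F Z S P) :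
    #{p : Fin F × Fin K | P p.1 p.2 ≠ none} = K * (F - Z) := by
  have column : ∀ j, #{i | P i j ≠ none} = F - Z := by
    intro j
    have := card_filter_add_card_filter_not (s := univ) fun i => P i j = none
    rw [h.1 j, card_univ, Fintype.card_fin] at this
    simp only [ne_eq]
    omega
  rw [card_filter, Fintype.sum_prod_type, sum_comm]
  simp_rw [← card_filter, column, sum_const, card_univ, Fintype.card_fin, smul_eq_mul]

theorem IsPDA.mul_sub_le (h : IsPDA K F Z S P) : K * (F - Z) ≤ S * (Z + 1) := by
  rw [← h.card_filter_ne_none_s18, ← card_range S]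
  calc #{p : Fin F × Fin K | P p.1 p.2 ≠ none}
      ≤ #((range S).biUnion fun s => {p : Fin F × Fin K | P p.1 p.2 = some s}) := by
        refine card_le_card fun p hp => ?_
        obtain ⟨s, hs⟩ := Option.ne_none_iff_exists'.mp (mem_filter.mp hp).2
        simpa [hs] using h.2.1 _ _ _ hs
    _ ≤ _ := card_biUnion_le_card_mul _ _ _ fun s _ => h.card_filter_eq_some_le s

theorem IsPDA.add_two_le {n : ℕ} (hn : 0 < n) (he : Even n)
    {P : Fin n → Fin (n ^ 2 / 2) → Option ℕ} (h : IsPDA (n ^ 2 / 2) n (n - 2) S P) :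
    n + 2 ≤ S := by
  obtain ⟨k, rfl⟩ : ∃ k, n = 2 * k + 2 := by obtain ⟨m, rfl⟩ := he; exact ⟨m - 1, by omega⟩
  have hK : (2 * k + 2) ^ 2 / 2 = 2 * (k + 1) ^ 2 := by
    rw [show (2 * k + 2) ^ 2 = 2 * (2 * (k + 1) ^ 2) by ring, Nat.mul_div_cancel_left _ two_pos]
  have hbound := h.mul_sub_le
  rw [hK, show 2 * k + 2 - (2 * k + 2 - 2) = 2 by omega,
    show 2 * k + 2 - 2 + 1 = 2 * k + 1 by omega] at hbound
  nlinarith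

end LowerBound

section Construction

/-- `IsPDA` with the columns indexed by an arbitrary type `ι`; for `ι = Fin K` it is
`IsPDA K F Z S` by definition. -/
def IsPDAOn {ι : Type*} (F Z S : ℕ) (P : Fin F → ι → Option ℕ) : Prop :=
  (∀ j, #{i | P i j = none} = Z) ∧
  (∀ i j s, P i j = some s → s < S) ∧
  (∀ s, s < S → ∃ i j, P i j = some s) ∧
  (∀ i₁ j₁ i₂ j₂ s, P i₁ j₁ = some s → P i₂ j₂ = some s → (i₁ ≠ i₂ ∨ j₁ ≠ j₂) →
    i₁ ≠ i₂ ∧ j₁ ≠ j₂ ∧ P i₁ j₂ = none ∧ P i₂ j₁ = none)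

variable {ι κ : Type*} {F Z S S₁ S₂ : ℕ}

theorem IsPDAOn.comp_equiv {P : Fin F → ι → Option ℕ} (h : IsPDAOn F Z S P) (e : κ ≃ ι) :
    IsPDAOn F Z S fun i k => P i (e k) := by
  refine ⟨fun k => h.1 (e k), fun i k => h.2.1 i (e k), fun s hs => ?_, ?_⟩
  · obtain ⟨i, j, hij⟩ := h.2.2.1 s hs
    exact ⟨i, e.symm j, by simpa using hij⟩
  · intro i₁ k₁ i₂ k₂ s h₁ h₂ hne
    simpa using h.2.2.2 i₁ (e k₁) i₂ (e k₂) s h₁ h₂ (by simpa using hne)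

def pdaAppend (P₁ : Fin F → ι → Option ℕ) (P₂ : Fin F → κ → Option ℕ) (S₁ : ℕ) :
    Fin F → ι ⊕ κ → Option ℕ :=
  fun i => Sum.elim (P₁ i) fun k => (P₂ i k).map (S₁ + ·)

theorem IsPDAOn.append {P₁ : Fin F → ι → Option ℕ} {P₂ : Fin F → κ → Option ℕ}
    (h₁ : IsPDAOn F Z S₁ P₁) (h₂ : IsPDAOn F Z S₂ P₂) :
    IsPDAOn F Z (S₁ + S₂) (pdaAppend P₁ P₂ S₁) := by
  refine ⟨?_, ?_, fun s hs => ?_, ?_⟩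
  · rintro (j | k)
    · exact h₁.1 j
    · simpa [pdaAppend] using h₂.1 k
  · rintro i (j | k) s hs
    · have := h₁.2.1 i j s hs
      omega
    · obtain ⟨t, ht, rfl⟩ := Option.map_eq_some_iff.mp hs
      have := h₂.2.1 i k t ht
      omega
  · by_cases hs₁ : s < S₁
    · obtain ⟨i, j, hij⟩ := h₁.2.2.1 s hs₁
      exact ⟨i, .inl j, hij⟩
    · obtain ⟨i, k, hik⟩ := h₂.2.2.1 (s - S₁) (by omega)
      exact ⟨i, .inr k, by simp [pdaAppend, hik]; omega⟩
  · rintro i₁ (j₁ | k₁) i₂ (j₂ | k₂) s hs₁ hs₂ hne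
    · simpa [pdaAppend] using h₁.2.2.2 i₁ j₁ i₂ j₂ s hs₁ hs₂ (by simpa using hne)
    · obtain ⟨t, -, rfl⟩ := Option.map_eq_some_iff.mp hs₂
      exact absurd (h₁.2.1 i₁ j₁ _ hs₁) (by omega)
    · obtain ⟨t, -, rfl⟩ := Option.map_eq_some_iff.mp hs₁
      exact absurd (h₁.2.1 i₂ j₂ _ hs₂) (by omega)
    · obtain ⟨t, ht₁, rfl⟩ := Option.map_eq_some_iff.mp hs₁
      obtain ⟨t', ht₂, ht⟩ := Option.map_eq_some_iff.mp hs₂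
      obtain rfl : t = t' := by omega
      simpa [pdaAppend] using h₂.2.2.2 i₁ k₁ i₂ k₂ t ht₁ ht₂ (by simpa using hne)

theorem card_filter_eq_none_of_two {a b : ℕ} (ha : a < F) (hb : b < F) (hab : a ≠ b)
    {f : Fin F → Option ℕ} (hf : ∀ i : Fin F, f i = none ↔ (i : ℕ) ≠ a ∧ (i : ℕ) ≠ b) :
    #{i | f i = none} = F - 2 := by
  have : ({i | f i = none} : Finset (Fin F)) = univ \ {⟨a, ha⟩, ⟨b, hb⟩} := by
    ext i
    simp [hf, Fin.ext_iff]
  rw [this, card_univ_sdiff, Fintype.card_fin, card_pair (by simpa [Fin.ext_iff] using hab)]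

/-- The transposed Ali–Niesen PDA; the column `⟨b, a⟩` stands for the pair `a < b`. -/
def pairPDA (n : ℕ) (i : Fin n) (c : Σ b : Fin n, Fin b) : Option ℕ :=
  if (i : ℕ) = c.2 then some c.1 else if (i : ℕ) = c.1 then some c.2 else none

theorem pairPDA_eq_some {n s : ℕ} {i : Fin n} {c : Σ b : Fin n, Fin b} :
    pairPDA n i c = some s ↔ (i : ℕ) = c.2 ∧ s = c.1 ∨ (i : ℕ) = c.1 ∧ s = c.2 := by
  have := c.2.isLt
  unfold pairPDA
  split_ifs <;> simp only [Option.some_inj, false_iff] <;> omega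

theorem pairPDA_eq_none {n : ℕ} {i : Fin n} {c : Σ b : Fin n, Fin b} :
    pairPDA n i c = none ↔ (i : ℕ) ≠ c.2 ∧ (i : ℕ) ≠ c.1 := by
  unfold pairPDA
  split_ifs <;> simp_all

theorem sigma_fin_eq_iff {n : ℕ} {c d : Σ b : Fin n, Fin b} :
    c = d ↔ (c.1 : ℕ) = d.1 ∧ (c.2 : ℕ) = d.2 := by
  refine ⟨by rintro rfl; simp, fun ⟨h₁, h₂⟩ => ?_⟩
  obtain ⟨b, a⟩ := c
  obtain ⟨b', a'⟩ := d
  obtain rfl : b = b' := Fin.ext h₁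
  simpa [Fin.ext_iff] using h₂

theorem isPDAOn_pairPDA {n : ℕ} (hn : 2 ≤ n) : IsPDAOn n (n - 2) n (pairPDA n) := by
  refine ⟨fun c => ?_, fun i c s hs => ?_, fun s hs => ?_, ?_⟩
  · have := c.2.isLt
    exact card_filter_eq_none_of_two (by omega) c.1.isLt (by omega) fun i => pairPDA_eq_none
  · have := c.2.isLt
    rw [pairPDA_eq_some] at hs
    omega
  · rcases Nat.eq_zero_or_pos s with rfl | hs₀
    · exact ⟨⟨1, by omega⟩, ⟨⟨1, by omega⟩, ⟨0, one_pos⟩⟩, pairPDA_eq_some.mpr (by simp)⟩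
    · exact ⟨⟨0, by omega⟩, ⟨⟨s, hs⟩, ⟨0, hs₀⟩⟩, pairPDA_eq_some.mpr (by simp)⟩
  · intro i₁ c₁ i₂ c₂ s h₁ h₂ hne
    have := c₁.2.isLt
    have := c₂.2.isLt
    rw [pairPDA_eq_some] at h₁ h₂
    simp only [pairPDA_eq_none, Ne, sigma_fin_eq_iff, Fin.ext_iff] at hne ⊢
    omega

/-- `n / 2` copies of the column `(0, 1)ᵀ` placed block-diagonally. -/
def blockPDA (n : ℕ) (i : Fin n) (k : Fin (n / 2)) : Option ℕ :=
  if (i : ℕ) / 2 = k then some ((i : ℕ) % 2) else none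

theorem isPDAOn_blockPDA {n : ℕ} (hn : 2 ≤ n) : IsPDAOn n (n - 2) 2 (blockPDA n) := by
  refine ⟨fun k => ?_, fun i k s hs => ?_, fun s hs => ?_, ?_⟩
  · have := k.isLt
    refine card_filter_eq_none_of_two (a := 2 * k) (b := 2 * k + 1) (by omega) (by omega)
      (by omega) fun i => ?_
    simp only [blockPDA, ite_eq_right_iff, reduceCtorEq, imp_false]
    omega
  · simp only [blockPDA, Option.ite_none_right_eq_some, Option.some_inj] at hs
    omega
  · exact ⟨⟨s, by omega⟩, ⟨0, by omega⟩,
      by simp [blockPDA, Nat.div_eq_of_lt hs, Nat.mod_eq_of_lt hs]⟩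
  · intro i₁ k₁ i₂ k₂ s h₁ h₂ hne
    simp only [blockPDA, Option.ite_none_right_eq_some, Option.some_inj] at h₁ h₂
    simp only [blockPDA, ite_eq_right_iff, reduceCtorEq, imp_false, Ne, Fin.ext_iff] at hne ⊢
    omega

end Construction

theorem card_sigma_fin_fin (n : ℕ) : Fintype.card (Σ b : Fin n, Fin b) = n.choose 2 := by
  rw [Fintype.card_sigma]
  simp only [Fintype.card_fin]
  rw [Fin.sum_univ_eq_sum_range (fun i => i) n, sum_range_id, Nat.choose_two_right]

theorem choose_two_add_div_two (n : ℕ) : n.choose 2 + n / 2 = n ^ 2 / 2 := by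
  rw [Nat.choose_two_right]
  obtain ⟨m, rfl | rfl⟩ := Nat.even_or_odd' n
  · have h₁ : 2 * m * (2 * m - 1) = 2 * (m * (2 * m - 1)) := by ring
    have h₂ : (2 * m) ^ 2 = 2 * (m * (2 * m - 1) + m) := by
      rcases m with _ | m
      · rfl
      · rw [show 2 * (m + 1) - 1 = 2 * m + 1 by omega]; ring
    omega
  · have h₁ : (2 * m + 1) * (2 * m + 1 - 1) = 2 * (m * (2 * m + 1)) := by
      rw [Nat.add_sub_cancel]; ring
    have h₂ : (2 * m + 1) ^ 2 = 2 * (m * (2 * m + 1) + m) + 1 := by ring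
    omega

theorem exists_isPDA_sq_div_two {n : ℕ} (hn : 2 ≤ n) :
    ∃ P : Fin n → Fin (n ^ 2 / 2) → Option ℕ, IsPDA (n ^ 2 / 2) n (n - 2) (n + 2) P := by
  have hcard : Fintype.card ((Σ b : Fin n, Fin b) ⊕ Fin (n / 2)) = n ^ 2 / 2 := by
    rw [Fintype.card_sum, card_sigma_fin_fin, Fintype.card_fin, choose_two_add_div_two]
  exact ⟨_, ((isPDAOn_pairPDA hn).append (isPDAOn_blockPDA hn)).comp_equiv
    (Fintype.equivFinOfCardEq hcard).symm⟩

theorem minS_eq_of_isPDA {K F Z S : ℕ} {P : Fin F → Fin K → Option ℕ} (hP : IsPDA K F Z S P)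
    (hle : ∀ S' P', IsPDA K F Z S' P' → S ≤ S') : minS K F Z = S :=
  le_antisymm (Nat.sInf_le ⟨P, hP⟩) (le_csInf ⟨S, P, hP⟩ fun _ ⟨P', hP'⟩ => hle _ P' hP')

/-- for n a positive even integer, a (n²/2, n, n−2, n+2) PDA
exists, every (n²/2, n, n−2, S) PDA has S ≥ n+2, and hence
S(n²/2, n, n−2) = n+2. -/
theorem stmt18 (n : ℕ) (hn : 0 < n) (he : Even n) :
    (∃ P : Fin n → Fin (n ^ 2 / 2) → Option ℕ, IsPDA (n ^ 2 / 2) n (n - 2) (n + 2) P) ∧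
    (∀ S : ℕ, ∀ P : Fin n → Fin (n ^ 2 / 2) → Option ℕ,
      IsPDA (n ^ 2 / 2) n (n - 2) S P → n + 2 ≤ S) ∧
    minS (n ^ 2 / 2) n (n - 2) = n + 2 := by
  obtain ⟨P, hP⟩ := exists_isPDA_sq_div_two (show 2 ≤ n by obtain ⟨m, rfl⟩ := he; omega)
  have lower : ∀ S P, IsPDA (n ^ 2 / 2) n (n - 2) S P → n + 2 ≤ S :=
    fun _ _ h => h.add_two_le hn he
  exact ⟨⟨P, hP⟩, lower, minS_eq_of_isPDA hP lower⟩
end
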